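/- arXiv:2109.10714 — 2 statements merged into one kernel-verified Lean document; each statement's English description precedes it below -/
import Mathlib

section
/- Let a2, a5, b2, b3, b5 be positive real numbers with a2 > 2 b2 and b3^2 ≠ b2 * b5. Suppose complex numbers x, y, z with x, y, z ≠ 0 satisfy: (i) a2 + a5 x - b2 (y + 1/y) - b3 x (z + 1/z + z/y + y/z) - b5 x^2 = 0, (ii) a5 - b3 (z + 1/z + z/y + y/z) - 2 b5 x = 0, (iii) b2 (1 - 1/y^2) + b3 x (1/z - z/y^2) = 0, (iv) b3 x (1 - 1/z^2 + 1/y - y/z^2) = 0, and additionally y ≠ 1 and y ≠ -1. Then y = z^2, b2 (z + 1/z) + b3 x = 0, x = - a5 b2 / (2 (b3^2 - b2 b5)), and the consistency condition 4 (b3^2 - b2 b5)(a2 + 2 b2) = a5^2 * b2 holds. -/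
/-!
Since `b3 x ≠ 0`, equation (iv) reads `(y + 1) (z² - y) = 0` after clearing denominators, so `y = z²`.
Substituting, (iii) becomes `(z² - 1) (b2 (z² + 1) + b3 x z) = 0`, giving the linear relation
`b2 (z + 1/z) + b3 x = 0`. Using it to eliminate `z + 1/z`, equation (ii) becomes linear in `x`
and equation (i) becomes the quadratic `(b3² - b2 b5) x² + a5 b2 x + b2 (a2 + 2 b2) = 0`,
of which (ii) says `x` is a double root; hence the discriminant vanishes.
-/

section Gamma9

variable {K : Type*} [Field K] {a2 a5 b2 b3 b5 x y z : K}

theorem eq_sq_of_eq_iv (hy : y ≠ 0) (hz : z ≠ 0)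
    (hy' : y ≠ -1) (h : 1 - 1 / z ^ 2 + 1 / y - y / z ^ 2 = 0) : y = z ^ 2 := by
  have factored : (y + 1) * (z ^ 2 - y) = 0 := by
    rw [← mul_zero (y * z ^ 2), ← h]
    field_simp
    ring
  rcases mul_eq_zero.mp factored with h | h
  · exact absurd (eq_neg_of_add_eq_zero_left h) hy'
  · exact (sub_eq_zero.mp h).symm

theorem linear_relation_of_eq_iii (hz : z ≠ 0) (hz1 : z ^ 2 ≠ 1)
    (h3 : b2 * (1 - 1 / (z ^ 2) ^ 2) + b3 * x * (1 / z - z / (z ^ 2) ^ 2) = 0) :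
    b2 * (z ^ 2 + 1) + b3 * x * z = 0 := by
  have factored : (b2 * (z ^ 2 + 1) + b3 * x * z) * (z ^ 2 - 1) = 0 := by
    rw [← mul_zero (z ^ 4), ← h3]
    field_simp
    ring
  exact (mul_eq_zero.mp factored).resolve_right (sub_ne_zero.mpr hz1)

theorem linear_eq_of_eq_ii (hz : z ≠ 0) (hK : b2 * (z ^ 2 + 1) + b3 * x * z = 0)
    (h2 : a5 - b3 * (z + 1 / z + z / z ^ 2 + z ^ 2 / z) - 2 * b5 * x = 0) :
    a5 * b2 + 2 * (b3 ^ 2 - b2 * b5) * x = 0 := by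
  have cleared : a5 * z - 2 * b3 * (z ^ 2 + 1) - 2 * b5 * x * z = 0 := by
    rw [← mul_zero z, ← h2]
    field_simp
    ring
  refine (mul_eq_zero.mp ?_).resolve_right hz
  linear_combination b2 * cleared + 2 * b3 * hK

theorem quadratic_eq_of_eq_i (hz : z ≠ 0) (hK : b2 * (z ^ 2 + 1) + b3 * x * z = 0)
    (h1 : a2 + a5 * x - b2 * (z ^ 2 + 1 / z ^ 2)
      - b3 * x * (z + 1 / z + z / z ^ 2 + z ^ 2 / z) - b5 * x ^ 2 = 0) :
    (b3 ^ 2 - b2 * b5) * (x * x) + a5 * b2 * x + b2 * (a2 + 2 * b2) = 0 := by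
  have cleared : a2 * z ^ 2 + a5 * x * z ^ 2 - b2 * (z ^ 4 + 1)
      - 2 * b3 * x * (z ^ 3 + z) - b5 * x ^ 2 * z ^ 2 = 0 := by
    rw [← mul_zero (z ^ 2), ← h1]
    field_simp
    ring
  refine (mul_eq_zero.mp ?_).resolve_right (pow_ne_zero 2 hz)
  linear_combination b2 * cleared + (b2 * (z ^ 2 + 1) + b3 * x * z) * hK

theorem consistency_of_double_root (hb2 : b2 ≠ 0)
    (hquad : (b3 ^ 2 - b2 * b5) * (x * x) + a5 * b2 * x + b2 * (a2 + 2 * b2) = 0)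
    (hlin : a5 * b2 + 2 * (b3 ^ 2 - b2 * b5) * x = 0) :
    4 * (b3 ^ 2 - b2 * b5) * (a2 + 2 * b2) = a5 ^ 2 * b2 := by
  have hsq := discrim_eq_sq_of_quadratic_eq_zero hquad
  rw [discrim, add_comm (2 * _ * x), hlin] at hsq
  refine mul_left_cancel₀ hb2 ?_
  linear_combination -hsq

end Gamma9

theorem stmt_5_general (a2 a5 b2 b3 b5 : ℝ)
    (hb2 : 0 < b2) (hb3 : 0 < b3)
    (hdisc : b3 ^ 2 ≠ b2 * b5)
    (x y z : ℂ) (hx : x ≠ 0) (hy : y ≠ 0) (hz : z ≠ 0)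
    (h1 : (a2 : ℂ) + a5 * x - b2 * (y + 1 / y)
        - b3 * x * (z + 1 / z + z / y + y / z) - b5 * x ^ 2 = 0)
    (h2 : (a5 : ℂ) - b3 * (z + 1 / z + z / y + y / z) - 2 * b5 * x = 0)
    (h3 : (b2 : ℂ) * (1 - 1 / y ^ 2) + b3 * x * (1 / z - z / y ^ 2) = 0)
    (h4 : (b3 : ℂ) * x * (1 - 1 / z ^ 2 + 1 / y - y / z ^ 2) = 0)
    (hy1 : y ≠ 1) (hy2 : y ≠ -1) :
    y = z ^ 2 ∧ (b2 : ℂ) * (z + 1 / z) + b3 * x = 0 ∧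
      x = -(a5 * b2 : ℂ) / (2 * ((b3 : ℂ) ^ 2 - b2 * b5)) ∧
      4 * (b3 ^ 2 - b2 * b5) * (a2 + 2 * b2) = a5 ^ 2 * b2 := by
  have hb2c : (b2 : ℂ) ≠ 0 := by exact_mod_cast hb2.ne'
  have hb3c : (b3 : ℂ) ≠ 0 := by exact_mod_cast hb3.ne'
  have hD : (b3 : ℂ) ^ 2 - b2 * b5 ≠ 0 := sub_ne_zero.mpr (by exact_mod_cast hdisc)
  obtain rfl : y = z ^ 2 := eq_sq_of_eq_iv hy hz hy2
    ((mul_eq_zero.mp h4).resolve_left (mul_ne_zero hb3c hx))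
  have hK := linear_relation_of_eq_iii hz hy1 h3
  have hlin := linear_eq_of_eq_ii hz hK h2
  refine ⟨rfl, ?_, ?_, ?_⟩
  · field_simp
    linear_combination hK
  · field_simp
    linear_combination hlin
  · exact_mod_cast consistency_of_double_root hb2c (quadratic_eq_of_eq_i hz hK h1) hlin

theorem stmt_5 (a2 a5 b2 b3 b5 : ℝ)
    (ha2 : 0 < a2) (ha5 : 0 < a5) (hb2 : 0 < b2) (hb3 : 0 < b3) (hb5 : 0 < b5)
    (hBig : a2 > 2 * b2) (hdisc : b3 ^ 2 ≠ b2 * b5)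
    (x y z : ℂ) (hx : x ≠ 0) (hy : y ≠ 0) (hz : z ≠ 0)
    (h1 : (a2 : ℂ) + a5 * x - b2 * (y + 1 / y)
        - b3 * x * (z + 1 / z + z / y + y / z) - b5 * x ^ 2 = 0)
    (h2 : (a5 : ℂ) - b3 * (z + 1 / z + z / y + y / z) - 2 * b5 * x = 0)
    (h3 : (b2 : ℂ) * (1 - 1 / y ^ 2) + b3 * x * (1 / z - z / y ^ 2) = 0)
    (h4 : (b3 : ℂ) * x * (1 - 1 / z ^ 2 + 1 / y - y / z ^ 2) = 0)
    (hy1 : y ≠ 1) (hy2 : y ≠ -1) :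
    y = z ^ 2 ∧ (b2 : ℂ) * (z + 1 / z) + b3 * x = 0 ∧
      x = -(a5 * b2 : ℂ) / (2 * ((b3 : ℂ) ^ 2 - b2 * b5)) ∧
      4 * (b3 ^ 2 - b2 * b5) * (a2 + 2 * b2) = a5 ^ 2 * b2 :=
  stmt_5_general a2 a5 b2 b3 b5 hb2 hb3 hdisc x y z hx hy hz h1 h2 h3 h4 hy1 hy2
end

section
/- Let b1, b2, b3, b4, b5 be positive real numbers such that b3^2 * b4 / (2 b5) * (b4/b5 - 1) is a real number r and -b2 * b4 / (b1 * b5) < 0. Then there exist no complex numbers x, y, z with x, y, z ≠ 0 satisfying simultaneously: (i) b1 + b2 x + b3 y (1+z) + b4 z + b5 y^2 z / x = 0, (ii) b2 - b5 y^2 z / x^2 = 0, (iii) b3 (1+z) + 2 b5 y z / x = 0, (iv) b3 y + b4 + b5 y^2 / x = 0. -/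
/-!
Eliminating between the first three equations gives `x (b1 + b4 z) = 0`, so `z = -b1/b4` is real.
The third equation then expresses `w = y/x` as a real number, while the second gives
`w² = b2/(b5 z) = -b2 b4/(b1 b5) < 0`: a real number with negative square.
-/

namespace Gamma7

variable {K : Type*} [Field K] {b1 b2 b3 b4 b5 x y z : K}

theorem b4_mul_z_eq_neg_b1 (hx : x ≠ 0)
    (e1 : b1 + b2 * x + b3 * y * (1 + z) + b4 * z + b5 * y ^ 2 * z / x = 0)
    (e2 : b2 - b5 * y ^ 2 * z / x ^ 2 = 0) (e3 : b3 * (1 + z) + 2 * b5 * y * z / x = 0) :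
    b4 * z = -b1 := by
  linear_combination (norm := skip) e1 - x * e2 - y * e3
  field_simp
  ring

theorem div_eq_of_third_eq [NeZero (2 : K)] (hb5 : b5 ≠ 0) (hz : z ≠ 0)
    (e3 : b3 * (1 + z) + 2 * b5 * y * z / x = 0) :
    y / x = -b3 * (1 + z) / (2 * b5 * z) := by
  rw [eq_div_iff (by simp [two_ne_zero, hb5, hz])]
  linear_combination e3

theorem div_sq_eq_of_second_eq (hx : x ≠ 0) (hb5 : b5 ≠ 0) (hz : z ≠ 0)
    (e2 : b2 - b5 * y ^ 2 * z / x ^ 2 = 0) :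
    (y / x) ^ 2 = b2 / (b5 * z) := by
  rw [eq_div_iff (mul_ne_zero hb5 hz)]
  linear_combination (norm := skip) -e2
  field_simp
  ring

end Gamma7

theorem Complex.ofReal_sq_ne_ofReal_of_neg (r : ℝ) {s : ℝ} (hs : s < 0) : (r : ℂ) ^ 2 ≠ s := by
  exact_mod_cast (hs.trans_le (sq_nonneg r)).ne'

theorem stmt_6_general (b1 b2 b3 b4 b5 : ℝ)
    (hneg : -b2 * b4 / (b1 * b5) < 0) :
    ¬ ∃ x y z : ℂ, x ≠ 0 ∧ y ≠ 0 ∧ z ≠ 0 ∧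
      (b1 : ℂ) + b2 * x + b3 * y * (1 + z) + b4 * z + b5 * y ^ 2 * z / x = 0 ∧
      (b2 : ℂ) - b5 * y ^ 2 * z / x ^ 2 = 0 ∧
      (b3 : ℂ) * (1 + z) + 2 * b5 * y * z / x = 0 ∧
      (b3 : ℂ) * y + b4 + b5 * y ^ 2 / x = 0 := by
  rintro ⟨x, y, z, hx, -, hz, e1, e2, e3, -⟩
  have hb1 : b1 ≠ 0 := by rintro rfl; simp at hneg
  have hb4 : b4 ≠ 0 := by rintro rfl; simp at hneg
  have hb5 : b5 ≠ 0 := by rintro rfl; simp at hneg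
  have hz_real : z = ((-b1 / b4 : ℝ) : ℂ) := by
    push_cast
    rw [eq_div_iff (by exact_mod_cast hb4)]
    linear_combination Gamma7.b4_mul_z_eq_neg_b1 hx e1 e2 e3
  have hw_real : y / x = ((-b3 * (1 + -b1 / b4) / (2 * b5 * (-b1 / b4)) : ℝ) : ℂ) := by
    rw [Gamma7.div_eq_of_third_eq (by exact_mod_cast hb5) hz e3, hz_real]
    norm_cast
  have hw_sq : (y / x) ^ 2 = ((-b2 * b4 / (b1 * b5) : ℝ) : ℂ) := by
    rw [Gamma7.div_sq_eq_of_second_eq hx (by exact_mod_cast hb5) hz e2, hz_real]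
    push_cast
    field_simp
  exact Complex.ofReal_sq_ne_ofReal_of_neg _ hneg (hw_real ▸ hw_sq)

theorem stmt_6 (b1 b2 b3 b4 b5 : ℝ)
    (hb1 : 0 < b1) (hb2 : 0 < b2) (hb3 : 0 < b3) (hb4 : 0 < b4) (hb5 : 0 < b5)
    (hr : ∃ r : ℝ, b3 ^ 2 * b4 / (2 * b5) * (b4 / b5 - 1) = r)
    (hneg : -b2 * b4 / (b1 * b5) < 0) :
    ¬ ∃ x y z : ℂ, x ≠ 0 ∧ y ≠ 0 ∧ z ≠ 0 ∧
      (b1 : ℂ) + b2 * x + b3 * y * (1 + z) + b4 * z + b5 * y ^ 2 * z / x = 0 ∧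
      (b2 : ℂ) - b5 * y ^ 2 * z / x ^ 2 = 0 ∧
      (b3 : ℂ) * (1 + z) + 2 * b5 * y * z / x = 0 ∧
      (b3 : ℂ) * y + b4 + b5 * y ^ 2 / x = 0 :=
  stmt_6_general b1 b2 b3 b4 b5 hneg
end
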